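/- Let ι = (0 = i₀ < ⋯ < i_N = 1) be a partition of [0,1], W a step graphon on ι with matrix W_ι, and fix j. Let u₀ ∈ L²([0,1]) decompose as u₀ = p₀ + Σ_k w_k with p₀ = 1_ιᵀ u⃗₀ ∈ 𝒫_ι and w_k ∈ L²₀((i_{k-1}, i_k]), and let u(x,t) = 1_ι(x)ᵀ exp(−Δ_{W_ι} t) u⃗₀ + Σ_k w_k(x) exp(−μ_k t) with μ_k = (W_ι 𝟙)_k be the solution of the graphon Cauchy problem with initial condition u₀. Then for x ∈ (i_{j-1}, i_j], u(x,t) − u_j(t) = (u₀(x) − u_{0j}) exp(−μ_j t), where u_j(t) = (exp(−Δ_{W_ι} t) u⃗₀)_j and u_{0j} = (u⃗₀)_j. Consequently, if μ_j > 0 then sup_{x ∈ (i_{j-1},i_j]} deviations |u(x,t) − u_j(t)| decay to 0 in L² as t → ∞ (the group collapses to its barycenter); if μ_j = 0 the deviation profile is constant in t; and if μ_j < 0 and w_j ≠ 0 the L² norm of the deviation grows exponentially. -/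

import Mathlib

open MeasureTheory Matrix Filter

noncomputable section

/-- The Lebesgue measure on the unit interval `(0,1]`, modelling `[0,1]`. -/
def μ01 : Measure ℝ := volume.restrict (Set.Ioc 0 1)

/-- The interval `(i_{j-1}, i_j]` of a partition `ι = (i₀, …, i_N)` of `[0,1]`. -/
def Iset {N : ℕ} (i : Fin (N + 1) → ℝ) (j : Fin N) : Set ℝ :=
  Set.Ioc (i j.castSucc) (i j.succ)

/-- The matrix `[W_ι]_{j₁j₂} = b_{j₁j₂}(i_{j₂} − i_{j₂-1})` of a step graphon. -/
def Wmat {N : ℕ} (i : Fin (N + 1) → ℝ) (b : Matrix (Fin N) (Fin N) ℝ) :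
    Matrix (Fin N) (Fin N) ℝ :=
  Matrix.of fun j₁ j₂ => b j₁ j₂ * (i j₂.succ - i j₂.castSucc)

/-- The Laplacian `Δ_A = diag(A𝟙) − A` of a square matrix. -/
def lap {N : ℕ} (A : Matrix (Fin N) (Fin N) ℝ) : Matrix (Fin N) (Fin N) ℝ :=
  Matrix.diagonal (A *ᵥ fun _ => (1 : ℝ)) - A

/-- The vector of indicators `1_ι(x) = (1_{(i_{j-1},i_j]}(x))_{j=1}^N`. -/
def oneι {N : ℕ} (i : Fin (N + 1) → ℝ) (x : ℝ) : Fin N → ℝ :=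
  fun j => (Iset i j).indicator (fun _ => (1 : ℝ)) x

/-- `L²₀(I)`: functions `u ∈ L²([0,1])` with `u = u·1_I` and `∫_I u = 0`. -/
def L20F (I : Set ℝ) : Set (ℝ → ℝ) :=
  {u | MemLp u 2 μ01 ∧ (∀ x, x ∉ I → u x = 0) ∧ ∫ x in I, u x = 0}

/-!
On the cell `(i_{j-1}, i_j]` the indicator vector `1_ι(x)` selects the `j`-th coordinate and,
the `w_k` being supported on their own cells, only `w_j` survives in the sums. Hence both
`u(x,t) - u_j(t)` and `u₀(x) - u_{0j}` reduce to `w_j(x)`, the first one multiplied by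
`exp(-μ_j t)`, and the squared `L²` deviation on the cell is `‖w_j‖² exp(-μ_j t)²`.
-/

section StepFunctions

variable {N : ℕ} {i : Fin (N + 1) → ℝ}

lemma notMem_Iset_of_ne (hi : Monotone i) {j k : Fin N} (hkj : k ≠ j) {x : ℝ}
    (hx : x ∈ Iset i j) : x ∉ Iset i k := by
  intro hxk
  rcases hkj.lt_or_gt with hlt | hlt
  · linarith [hx.1, hxk.2, hi (Fin.succ_le_castSucc_iff.2 hlt)]
  · linarith [hx.2, hxk.1, hi (Fin.succ_le_castSucc_iff.2 hlt)]

lemma oneι_dotProduct_of_mem (hi : Monotone i) {j : Fin N} {x : ℝ} (hx : x ∈ Iset i j)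
    (v : Fin N → ℝ) : oneι i x ⬝ᵥ v = v j := by
  rw [dotProduct, Finset.sum_eq_single_of_mem j (Finset.mem_univ j) fun k _ hkj => by
    simp [oneι, Set.indicator_of_notMem (notMem_Iset_of_ne hi hkj hx)]]
  simp [oneι, Set.indicator_of_mem hx]

lemma sum_mul_eq_of_mem_Iset (hi : Monotone i) {w : Fin N → ℝ → ℝ}
    (hw : ∀ k, ∀ x ∉ Iset i k, w k x = 0) {j : Fin N} {x : ℝ} (hx : x ∈ Iset i j)
    (c : Fin N → ℝ) : ∑ k, w k x * c k = w j x * c j :=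
  Finset.sum_eq_single_of_mem j (Finset.mem_univ j) fun k _ hkj => by
    rw [hw k x (notMem_Iset_of_ne hi hkj hx), zero_mul]

end StepFunctions

lemma tendsto_mul_exp_sq_nhds_zero (C : ℝ) {m : ℝ} (hm : 0 < m) :
    Tendsto (fun t => C * Real.exp (-m * t) ^ 2) atTop (nhds 0) := by
  have hexp : Tendsto (fun t => Real.exp (-m * t)) atTop (nhds 0) :=
    Real.tendsto_exp_atBot.comp (tendsto_id.const_mul_atTop_of_neg (neg_neg_of_pos hm))
  simpa using (hexp.pow 2).const_mul C

lemma tendsto_mul_exp_sq_atTop {C m : ℝ} (hC : 0 < C) (hm : m < 0) :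
    Tendsto (fun t => C * Real.exp (-m * t) ^ 2) atTop atTop := by
  have hexp : Tendsto (fun t => Real.exp (-m * t)) atTop atTop :=
    Real.tendsto_exp_atTop.comp (tendsto_id.const_mul_atTop (neg_pos.2 hm))
  exact (hexp.atTop_mul_atTop₀ hexp).const_mul_atTop hC |>.congr fun t => by rw [sq]

theorem stmt17_general (N : ℕ) (i : Fin (N + 1) → ℝ) (hmono : StrictMono i)
    (b : Matrix (Fin N) (Fin N) ℝ)
    (j : Fin N) (u0vec : Fin N → ℝ) (w : Fin N → ℝ → ℝ)
    (hw : ∀ k, w k ∈ L20F (Iset i k))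
    (μ : Fin N → ℝ)
    (u₀ : ℝ → ℝ) (hu₀ : u₀ = fun x => oneι i x ⬝ᵥ u0vec + ∑ k : Fin N, w k x)
    (u : ℝ → ℝ → ℝ)
    (hu : u = fun x t => oneι i x ⬝ᵥ (NormedSpace.exp ((-t) • lap (Wmat i b)) *ᵥ u0vec) +
      ∑ k : Fin N, w k x * Real.exp (-(μ k) * t))
    (uj : ℝ → ℝ)
    (huj : uj = fun t => (NormedSpace.exp ((-t) • lap (Wmat i b)) *ᵥ u0vec) j) :
    (∀ t : ℝ, ∀ x ∈ Iset i j,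
      u x t - uj t = (u₀ x - u0vec j) * Real.exp (-(μ j) * t)) ∧
    (0 < μ j →
      Tendsto (fun t : ℝ => ∫ x in Iset i j, (u x t - uj t) ^ 2) atTop (nhds 0)) ∧
    (μ j = 0 → ∀ t : ℝ, ∀ x ∈ Iset i j, u x t - uj t = u₀ x - u0vec j) ∧
    (μ j < 0 → 0 < ∫ x in Iset i j, w j x ^ 2 →
      Tendsto (fun t : ℝ => ∫ x in Iset i j, (u x t - uj t) ^ 2) atTop atTop) := by
  have hsupp : ∀ k, ∀ x ∉ Iset i k, w k x = 0 := fun k => (hw k).2.1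
  have hdev : ∀ t, ∀ x ∈ Iset i j, u x t - uj t = w j x * Real.exp (-(μ j) * t) :=
    fun t x hx => by
      simp only [hu, huj]
      rw [oneι_dotProduct_of_mem hmono.monotone hx,
        sum_mul_eq_of_mem_Iset hmono.monotone hsupp hx]
      ring
  have hdev₀ : ∀ x ∈ Iset i j, u₀ x - u0vec j = w j x := fun x hx => by
    simpa [hu₀, oneι_dotProduct_of_mem hmono.monotone hx] using
      sum_mul_eq_of_mem_Iset hmono.monotone hsupp hx 1
  have hL2 : ∀ t, ∫ x in Iset i j, (u x t - uj t) ^ 2 =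
      (∫ x in Iset i j, w j x ^ 2) * Real.exp (-(μ j) * t) ^ 2 := fun t => by
    rw [← integral_mul_const]
    exact setIntegral_congr_fun measurableSet_Ioc fun x hx => by rw [hdev t x hx, mul_pow]
  refine ⟨fun t x hx => ?_, fun hμj => ?_, fun hμj t x hx => ?_, fun hμj hw₂ => ?_⟩
  · rw [hdev t x hx, hdev₀ x hx]
  · simpa only [hL2] using tendsto_mul_exp_sq_nhds_zero _ hμj
  · rw [hdev t x hx, hdev₀ x hx, hμj, neg_zero, zero_mul, Real.exp_zero, mul_one]
  · simpa only [hL2] using tendsto_mul_exp_sq_atTop hw₂ hμj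

/-- Let `u₀ = p₀ + Σ_k w_k` with `p₀ = 1_ιᵀ u⃗₀ ∈ 𝒫_ι` and
`w_k ∈ L²₀((i_{k-1}, i_k])`, and let
`u(x,t) = 1_ι(x)ᵀ exp(−Δ_{W_ι} t) u⃗₀ + Σ_k w_k(x) exp(−μ_k t)`, `μ_k = (W_ι 𝟙)_k`, be
the solution of the graphon Cauchy problem with initial condition `u₀`. Then for
`x ∈ (i_{j-1}, i_j]`, `u(x,t) − u_j(t) = (u₀(x) − u_{0j}) exp(−μ_j t)` where
`u_j(t) = (exp(−Δ_{W_ι} t) u⃗₀)_j`; consequently, if `μ_j > 0` the `L²` norm of the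
deviation inside group `j` decays to `0` as `t → ∞`; if `μ_j = 0` the deviation profile
is constant in `t`; and if `μ_j < 0` and `w_j ≠ 0` the `L²` norm of the deviation grows
to infinity. -/
theorem stmt17 (N : ℕ) (hN : 0 < N) (i : Fin (N + 1) → ℝ) (hmono : StrictMono i)
    (h0 : i 0 = 0) (h1 : i (Fin.last N) = 1) (b : Matrix (Fin N) (Fin N) ℝ)
    (j : Fin N) (u0vec : Fin N → ℝ) (w : Fin N → ℝ → ℝ)
    (hw : ∀ k, w k ∈ L20F (Iset i k))
    (μ : Fin N → ℝ) (hμ : μ = Wmat i b *ᵥ fun _ => (1 : ℝ))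
    (u₀ : ℝ → ℝ) (hu₀ : u₀ = fun x => oneι i x ⬝ᵥ u0vec + ∑ k : Fin N, w k x)
    (u : ℝ → ℝ → ℝ)
    (hu : u = fun x t => oneι i x ⬝ᵥ (NormedSpace.exp ((-t) • lap (Wmat i b)) *ᵥ u0vec) +
      ∑ k : Fin N, w k x * Real.exp (-(μ k) * t))
    (uj : ℝ → ℝ)
    (huj : uj = fun t => (NormedSpace.exp ((-t) • lap (Wmat i b)) *ᵥ u0vec) j) :
    (∀ t : ℝ, ∀ x ∈ Iset i j,
      u x t - uj t = (u₀ x - u0vec j) * Real.exp (-(μ j) * t)) ∧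
    (0 < μ j →
      Tendsto (fun t : ℝ => ∫ x in Iset i j, (u x t - uj t) ^ 2) atTop (nhds 0)) ∧
    (μ j = 0 → ∀ t : ℝ, ∀ x ∈ Iset i j, u x t - uj t = u₀ x - u0vec j) ∧
    (μ j < 0 → 0 < ∫ x in Iset i j, w j x ^ 2 →
      Tendsto (fun t : ℝ => ∫ x in Iset i j, (u x t - uj t) ^ 2) atTop atTop) :=
  stmt17_general N i hmono b j u0vec w hw μ u₀ hu₀ u hu uj huj
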